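/- Let d be an odd prime, x : Z_d × Z_d → ℂ a function, and ρ a bipartite density supported in M such that for every k ≠ 0 and all n, r ∈ Z_d, ρ_{n(n+r), (n+k)(n+r+k)} = x(n,r) · conj(x(n+k,r)). If every diagonal entry of ρ is at least Σ_{n,r ∈ Z_d} |x(n,r)|², then ρ is separable. -/

import Mathlib

open Matrix Kronecker
open scoped ComplexOrder

/-- A bipartite density on `C^d ⊗ C^d` is separable if it is a finite convex
combination of Kronecker products of `d×d` densities. -/
def IsSeparableState {d : ℕ} [NeZero d]
    (ρ : Matrix (ZMod d × ZMod d) (ZMod d × ZMod d) ℂ) : Prop :=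
  ∃ (n : ℕ) (w : Fin n → ℝ) (σ τ : Fin n → Matrix (ZMod d) (ZMod d) ℂ),
    (∀ i, 0 ≤ w i) ∧ (∑ i, w i = 1) ∧
    (∀ i, (σ i).PosSemidef ∧ (σ i).trace = 1) ∧
    (∀ i, (τ i).PosSemidef ∧ (τ i).trace = 1) ∧
    ρ = ∑ i, (w i : ℂ) • (σ i ⊗ₖ τ i)

/-!
For `r, θ, φ ∈ ZMod d` let `χ(n) = e(nθ + n²φ)` (`chirp θ φ`) and take the product vector
`(x(n,r) χ(n))ₙ ⊗ (conj χ(s - r))ₛ`. Summing the corresponding rank-one matrices over `θ` and `φ`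
keeps the entry `(j, k)` only when `j₁ + (k₂ - r) = k₁ + (j₂ - r)` and
`j₁² + (k₂ - r)² = k₁² + (j₂ - r)²`; as `d` is an odd prime this forces
`{j₁, k₂ - r} = {k₁, j₂ - r}`.
Hence `d⁻²` times the sum over `r`, `θ`, `φ` agrees with `ρ` off the diagonal, and its diagonal
entries `∑ᵣ |x(j₁,r)|²` are at most those of `ρ`. The difference is a nonnegative diagonal matrix,
again a sum of product states, and normalising by the trace gives the convex combination.
-/

open ComplexConjugate

namespace Matrix

theorem posSemidef_single_self {m : Type*} [Fintype m] [DecidableEq m] (i : m) {r : ℂ}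
    (hr : 0 ≤ r) : (single i i r).PosSemidef := by
  rw [← diagonal_single]
  exact PosSemidef.diagonal (Pi.single_nonneg.mpr hr)

theorem PosSemidef.exists_eq_smul_density {m : Type*} [Fintype m] [DecidableEq m] [Nonempty m]
    {A : Matrix m m ℂ} (hA : A.PosSemidef) :
    ∃ w : ℝ, 0 ≤ w ∧ ∃ σ : Matrix m m ℂ, σ.PosSemidef ∧ σ.trace = 1 ∧ A = (w : ℂ) • σ := by
  obtain ⟨w, hw, htr⟩ := RCLike.nonneg_iff_exists_ofReal.mp hA.trace_nonneg
  replace htr : A.trace = (w : ℂ) := htr.symm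
  rcases hw.eq_or_lt with rfl | hw
  · refine ⟨0, le_rfl, single (Classical.arbitrary m) (Classical.arbitrary m) 1,
      posSemidef_single_self _ zero_le_one, by simp, ?_⟩
    simpa using hA.trace_eq_zero_iff.mp (by simpa using htr)
  · have hw' : (w : ℂ) ≠ 0 := by exact_mod_cast hw.ne'
    refine ⟨w, hw.le, (w : ℂ)⁻¹ • A, hA.smul (inv_nonneg_of_nonneg ?_), ?_, ?_⟩
    · exact_mod_cast hw.le
    · rw [trace_smul, htr, smul_eq_mul, inv_mul_cancel₀ hw']
    · rw [smul_smul, mul_inv_cancel₀ hw', one_smul]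

end Matrix

namespace ProductEntries

section SeparableCone

variable {m n : Type*}

def separableCone : AddSubmonoid (Matrix (m × n) (m × n) ℂ) :=
  AddSubmonoid.closure {ρ | ∃ A B : Matrix _ _ ℂ, A.PosSemidef ∧ B.PosSemidef ∧ ρ = A ⊗ₖ B}

lemma kronecker_mem_separableCone {A : Matrix m m ℂ} {B : Matrix n n ℂ}
    (hA : A.PosSemidef) (hB : B.PosSemidef) : A ⊗ₖ B ∈ separableCone :=
  AddSubmonoid.subset_closure ⟨A, B, hA, hB, rfl⟩

lemma smul_mem_separableCone {c : ℂ} (hc : 0 ≤ c) {ρ : Matrix (m × n) (m × n) ℂ}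
    (hρ : ρ ∈ separableCone) : c • ρ ∈ separableCone := by
  induction hρ using AddSubmonoid.closure_induction with
  | mem _ h =>
    obtain ⟨A, B, hA, hB, rfl⟩ := h
    rw [← smul_kronecker]
    exact kronecker_mem_separableCone (hA.smul hc) hB
  | zero => simp
  | add _ _ _ _ h₁ h₂ => simpa [smul_add] using add_mem h₁ h₂

lemma diagonal_mem_separableCone [Fintype m] [Fintype n] [DecidableEq m] [DecidableEq n]
    {c : m × n → ℂ} (hc : 0 ≤ c) :
    diagonal c ∈ separableCone := by
  have hsum : diagonal c = ∑ i, single i.1 i.1 (c i) ⊗ₖ single i.2 i.2 1 := by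
    simp_rw [single_kronecker_single, mul_one, ← diagonal_single, ← diagonalAddMonoidHom_apply,
      ← map_sum, Finset.univ_sum_single]
  rw [hsum]
  exact sum_mem fun i _ => kronecker_mem_separableCone (posSemidef_single_self _ (hc i))
    (posSemidef_single_self _ zero_le_one)

end SeparableCone

lemma isSeparableState_of_mem_separableCone {d : ℕ} [NeZero d]
    {ρ : Matrix (ZMod d × ZMod d) (ZMod d × ZMod d) ℂ} (hρ : ρ ∈ separableCone)
    (htr : ρ.trace = 1) : IsSeparableState ρ := by
  obtain ⟨l, hl, rfl⟩ := AddSubmonoid.exists_list_of_mem_closure hρ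
  choose A B hA hB hAB using fun i : Fin l.length => hl _ (l.get_mem i)
  choose a ha σ hσ using fun i => PosSemidef.exists_eq_smul_density (hA i)
  choose b hb τ hτ using fun i => PosSemidef.exists_eq_smul_density (hB i)
  have hsum : l.sum = ∑ i, ((a i * b i : ℝ) : ℂ) • (σ i ⊗ₖ τ i) := by
    conv_lhs => rw [← List.ofFn_get l]
    rw [List.sum_ofFn]
    refine Finset.sum_congr rfl fun i _ => ?_
    rw [hAB, (hσ i).2.2, (hτ i).2.2, smul_kronecker, kronecker_smul, smul_smul]
    rw [Complex.ofReal_mul]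
  refine ⟨l.length, fun i => a i * b i, σ, τ, fun i => mul_nonneg (ha i) (hb i), ?_,
    fun i => ⟨(hσ i).1, (hσ i).2.1⟩, fun i => ⟨(hτ i).1, (hτ i).2.1⟩, hsum⟩
  rw [hsum, trace_sum] at htr
  simp only [trace_smul, trace_kronecker, (hσ _).2.1, (hτ _).2.1, mul_one, smul_eq_mul] at htr
  exact_mod_cast htr

lemma add_eq_add_and_sq_add_sq_eq_iff {R : Type*} [CommRing R] [NoZeroDivisors R]
    (h2 : (2 : R) ≠ 0) {a b c e : R} :
    a + b = c + e ∧ a ^ 2 + b ^ 2 = c ^ 2 + e ^ 2 ↔ (a = c ∧ b = e) ∨ (a = e ∧ b = c) := by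
  constructor
  · rintro ⟨hsum, hsq⟩
    have hprod : a * b = c * e :=
      mul_left_cancel₀ h2 (by linear_combination (a + b + c + e) * hsum - hsq)
    have hroots : (a - c) * (a - e) = 0 := by linear_combination a * hsum - hprod
    rcases mul_eq_zero.mp hroots with h | h
    · exact .inl ⟨by linear_combination h, by linear_combination hsum - h⟩
    · exact .inr ⟨by linear_combination h, by linear_combination hsum - h⟩
  · rintro (⟨rfl, rfl⟩ | ⟨rfl, rfl⟩) <;> constructor <;> ring

section QuadraticTwirl

variable {d : ℕ} [NeZero d]

noncomputable def chirp (θ φ n : ZMod d) : ℂ := ZMod.stdAddChar (n * θ + n ^ 2 * φ)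

lemma sum_sum_stdAddChar (s q : ZMod d) :
    ∑ θ : ZMod d, ∑ φ : ZMod d, ZMod.stdAddChar (θ * s + φ * q) =
      if s = 0 ∧ q = 0 then (d : ℂ) ^ 2 else 0 := by
  simp_rw [AddChar.map_add_eq_mul, ← Finset.mul_sum, ← Finset.sum_mul,
    AddChar.sum_mulShift _ (ZMod.isPrimitive_stdAddChar d), ZMod.card]
  split_ifs <;> simp_all [sq]

lemma chirp_mul_chirp_mul_conj_mul_conj (θ φ a b c e : ZMod d) :
    chirp θ φ a * chirp θ φ b * conj (chirp θ φ c) * conj (chirp θ φ e) =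
      ZMod.stdAddChar (θ * (a + b - c - e) + φ * (a ^ 2 + b ^ 2 - c ^ 2 - e ^ 2)) := by
  simp only [chirp, ← AddChar.map_neg_eq_conj, ← AddChar.map_add_eq_mul]
  congr 1
  ring

lemma sum_sum_chirp [Fact d.Prime] (hd2 : d ≠ 2) (a b c e : ZMod d) :
    ∑ θ, ∑ φ, chirp θ φ a * chirp θ φ b * conj (chirp θ φ c) * conj (chirp θ φ e) =
      if (a = c ∧ b = e) ∨ (a = e ∧ b = c) then (d : ℂ) ^ 2 else 0 := by
  have h2 : (2 : ZMod d) ≠ 0 := Ring.two_ne_zero (by rwa [ZMod.ringChar_zmod_n])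
  simp_rw [chirp_mul_chirp_mul_conj_mul_conj, sum_sum_stdAddChar, sub_sub, sub_eq_zero,
    add_eq_add_and_sq_add_sq_eq_iff h2]

noncomputable def chirpedColumn (x : ZMod d → ZMod d → ℂ) (r θ φ : ZMod d) : ZMod d → ℂ :=
  fun n => x n r * chirp θ φ n

noncomputable def shiftedChirp (r θ φ : ZMod d) : ZMod d → ℂ :=
  fun s => conj (chirp θ φ (s - r))

noncomputable def twirl (x : ZMod d → ZMod d → ℂ) :
    Matrix (ZMod d × ZMod d) (ZMod d × ZMod d) ℂ :=
  ∑ r, ∑ θ, ∑ φ, vecMulVec (chirpedColumn x r θ φ) (star (chirpedColumn x r θ φ)) ⊗ₖ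
    vecMulVec (shiftedChirp r θ φ) (star (shiftedChirp r θ φ))

lemma twirl_mem_separableCone (x : ZMod d → ZMod d → ℂ) : twirl x ∈ separableCone :=
  sum_mem fun _ _ => sum_mem fun _ _ => sum_mem fun _ _ =>
    kronecker_mem_separableCone (posSemidef_vecMulVec_self_star _)
      (posSemidef_vecMulVec_self_star _)

lemma twirl_apply [Fact d.Prime] (hd2 : d ≠ 2) (x : ZMod d → ZMod d → ℂ)
    (j k : ZMod d × ZMod d) :
    twirl x j k = (d : ℂ) ^ 2 * ∑ r,
      if j = k ∨ (j.2 - j.1 = r ∧ k.2 - k.1 = r) then x j.1 r * conj (x k.1 r) else 0 := by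
  obtain ⟨j₁, j₂⟩ := j
  obtain ⟨k₁, k₂⟩ := k
  have hcond : ∀ r, (j₁ = k₁ ∧ k₂ - r = j₂ - r) ∨ (j₁ = j₂ - r ∧ k₂ - r = k₁) ↔
      (j₁, j₂) = (k₁, k₂) ∨ (j₂ - j₁ = r ∧ k₂ - k₁ = r) := fun r => by grind
  simp only [twirl, Matrix.sum_apply, kroneckerMap_apply, vecMulVec_apply, chirpedColumn,
    shiftedChirp, Pi.star_apply, RCLike.star_def, map_mul, Complex.conj_conj, Finset.mul_sum]
  refine Finset.sum_congr rfl fun r _ => ?_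
  calc _ = x j₁ r * conj (x k₁ r) * ∑ θ, ∑ φ, chirp θ φ j₁ * chirp θ φ (k₂ - r) *
          conj (chirp θ φ k₁) * conj (chirp θ φ (j₂ - r)) := by
        simp_rw [Finset.mul_sum]
        exact Finset.sum_congr rfl fun θ _ => Finset.sum_congr rfl fun φ _ => by ring
    _ = _ := by
        rw [sum_sum_chirp hd2, if_congr (hcond r) rfl rfl]
        split_ifs <;> ring

lemma eq_smul_twirl_add_diagonal [Fact d.Prime] (hd2 : d ≠ 2) {x : ZMod d → ZMod d → ℂ}
    {ρ : Matrix (ZMod d × ZMod d) (ZMod d × ZMod d) ℂ}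
    (hsupp : ∀ j1 j2 k1 k2 : ZMod d, j2 - j1 ≠ k2 - k1 → ρ (j1, j2) (k1, k2) = 0)
    (hval : ∀ k : ZMod d, k ≠ 0 → ∀ n r : ZMod d,
        ρ (n, n + r) (n + k, n + r + k) = x n r * conj (x (n + k) r)) :
    ρ = ((d : ℂ) ^ 2)⁻¹ • twirl x +
      diagonal fun i => ρ i i - ∑ r, (Complex.normSq (x i.1 r) : ℂ) := by
  have hd : (d : ℂ) ^ 2 ≠ 0 := pow_ne_zero _ (Nat.cast_ne_zero.mpr (NeZero.ne d))
  ext j k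
  rw [Matrix.add_apply, Matrix.smul_apply, twirl_apply hd2, smul_eq_mul, inv_mul_cancel_left₀ hd]
  by_cases hjk : j = k
  · subst hjk
    simp [Complex.mul_conj]
  obtain ⟨j₁, j₂⟩ := j
  obtain ⟨k₁, k₂⟩ := k
  simp only [hjk, false_or, diagonal_apply_ne _ hjk, add_zero]
  by_cases h : j₂ - j₁ = k₂ - k₁
  · have hk : k₁ - j₁ ≠ 0 := fun h₀ => hjk (by grind)
    have hρ := hval (k₁ - j₁) hk j₁ (j₂ - j₁)
    rw [add_sub_cancel, add_sub_cancel, show j₂ + (k₁ - j₁) = k₂ by grind] at hρ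
    simp only [← h, and_self, Finset.sum_ite_eq, Finset.mem_univ, if_true, hρ]
  · rw [hsupp _ _ _ _ h]
    exact (Finset.sum_eq_zero fun r _ => if_neg fun hr => h (hr.1.trans hr.2.symm)).symm

end QuadraticTwirl

end ProductEntries

open ProductEntries in
/-- For `d` an odd prime, `x : Z_d × Z_d → ℂ`, and `ρ` a
bipartite density supported in `M` with product entries
`ρ_{n(n+r),(n+k)(n+r+k)} = x(n,r) conj(x(n+k,r))` for `k ≠ 0`:
if every diagonal entry of `ρ` is at least `Σ_{n,r} |x(n,r)|²`, then `ρ` is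
separable. -/
theorem product_entries_separable (d : ℕ) [NeZero d] (hd : d.Prime) (hodd : Odd d)
    (x : ZMod d → ZMod d → ℂ)
    (ρ : Matrix (ZMod d × ZMod d) (ZMod d × ZMod d) ℂ)
    (hρ : ρ.PosSemidef ∧ ρ.trace = 1)
    (hsupp : ∀ j1 j2 k1 k2 : ZMod d, j2 - j1 ≠ k2 - k1 → ρ (j1, j2) (k1, k2) = 0)
    (hval : ∀ k : ZMod d, k ≠ 0 → ∀ n r : ZMod d,
        ρ (n, n + r) (n + k, n + r + k) = x n r * (starRingEnd ℂ) (x (n + k) r))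
    (hdiag : ∀ i : ZMod d × ZMod d,
        (∑ n : ZMod d, ∑ r : ZMod d, Complex.normSq (x n r)) ≤ (ρ i i).re) :
    IsSeparableState ρ := by
  have : Fact d.Prime := ⟨hd⟩
  have hd2 : d ≠ 2 := by rintro rfl; exact absurd hodd (by decide)
  refine isSeparableState_of_mem_separableCone ?_ hρ.2
  rw [eq_smul_twirl_add_diagonal hd2 hsupp hval]
  refine add_mem (smul_mem_separableCone ?_ (twirl_mem_separableCone x))
    (diagonal_mem_separableCone fun i => ?_)
  · exact inv_nonneg_of_nonneg (by positivity)
  · have hrow : ∑ r, Complex.normSq (x i.1 r) ≤ (ρ i i).re :=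
      (Finset.single_le_sum (f := fun n => ∑ r, Complex.normSq (x n r))
        (fun n _ => Finset.sum_nonneg fun r _ => Complex.normSq_nonneg _)
        (Finset.mem_univ i.1)).trans (hdiag i)
    rw [Pi.zero_apply, ← Complex.conj_eq_iff_re.mp (hρ.1.isHermitian.apply i i)]
    simpa using Complex.zero_le_real.mpr (sub_nonneg.mpr hrow)
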